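/- arXiv:1506.03119 — 2 statements merged into one kernel-verified Lean document; each statement's English description precedes it below -/
import Mathlib

section
/- Cofibrations are epimorphisms in the combinatorial model of 2-Cob: if ψ: X → Y is a cofibration and φ, φ': Y → Z are cobordisms with φ ∘ ψ = φ' ∘ ψ (as equivalence classes of cobordisms), then φ = φ'. -/
open scoped Classical

/-- The relation generating the pushout of a span `A ← k → B` of (finite) sets. -/
def PRel {k A B : Type} (f : k → A) (g : k → B) : A ⊕ B → A ⊕ B → Prop :=
  fun x y => ∃ z, x = Sum.inl (f z) ∧ y = Sum.inr (g z)

/-- The pushout of the span `A ← k → B`. -/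
def Pushout {k A B : Type} (f : k → A) (g : k → B) : Type :=
  Quot (PRel f g)

/-- Canonical map `ι_A : A → A ⊔_k B`. -/
def pInl {k A B : Type} (f : k → A) (g : k → B) (a : A) : Pushout f g :=
  Quot.mk _ (Sum.inl a)

/-- Canonical map `ι_B : B → A ⊔_k B`. -/
def pInr {k A B : Type} (f : k → A) (g : k → B) (b : B) : Pushout f g :=
  Quot.mk _ (Sum.inr b)

instance {k A B : Type} (f : k → A) (g : k → B) [Finite A] [Finite B] :
    Finite (Pushout f g) :=
  Quot.finite _

noncomputable instance {k A B : Type} (f : k → A) (g : k → B) [Fintype A] [Fintype B] :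
    Fintype (Pushout f g) :=
  Fintype.ofFinite _

/-- The genus formula of Definition 3.4:
`g(x) = 1 + Σ_{ι_A(a)=x}(g₁(a)−1) + Σ_{ι_B(b)=x}(g₂(b)−1) + #{y ∈ k : y ↦ x}`. -/
noncomputable def compGenus {k A B : Type} [Fintype k] [Fintype A] [Fintype B]
    (f : k → A) (g : k → B) (g1 : A → ℤ) (g2 : B → ℤ) (x : Pushout f g) : ℤ :=
  1 + (∑ a ∈ Finset.univ.filter (fun a => pInl f g a = x), (g1 a - 1))
    + (∑ b ∈ Finset.univ.filter (fun b => pInr f g b = x), (g2 b - 1))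
    + ((Finset.univ.filter (fun y : k => pInl f g (f y) = x)).card : ℤ)

/-- A combinatorial 2-cobordism from the finite set `m` to the finite set `n`. -/
structure Cob (m n : Type) : Type 1 where
  C : Type
  [fin : Fintype C]
  lm : m → C
  ln : n → C
  g : C → ℕ

attribute [instance] Cob.fin

/-- Composition of combinatorial 2-cobordisms via pushout of component sets
and the genus formula of Definition 3.4. -/
noncomputable def Cob.comp {m k n : Type} [Fintype k] (ψ : Cob k n) (φ : Cob m k) :
    Cob m n where
  C := Pushout φ.ln ψ.lm
  lm := fun x => pInl φ.ln ψ.lm (φ.lm x)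
  ln := fun y => pInr φ.ln ψ.lm (ψ.ln y)
  g := fun x =>
    (compGenus φ.ln ψ.lm (fun a => (φ.g a : ℤ)) (fun b => (ψ.g b : ℤ)) x).toNat

/-- Equivalence of combinatorial 2-cobordisms: a bijection of component sets
intertwining the structure maps and the genus functions. -/
def Cob.Equiv {m n : Type} (φ φ' : Cob m n) : Prop :=
  ∃ χ : φ.C ≃ φ'.C,
    (∀ x, χ (φ.lm x) = φ'.lm x) ∧ (∀ y, χ (φ.ln y) = φ'.ln y) ∧
    (∀ c, φ'.g (χ c) = φ.g c)

/-- A cofibration: `l_n` is injective and `l_n` lifts through `l_m`. -/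
def Cob.IsCofib {m n : Type} (φ : Cob m n) : Prop :=
  Function.Injective φ.ln ∧ ∃ u : n → m, ∀ y, φ.lm (u y) = φ.ln y

/-- A fibration: `l_m` is injective, `l_n` is surjective, and `g ∘ l_m = 0`. -/
def Cob.IsFib {m n : Type} (φ : Cob m n) : Prop :=
  Function.Injective φ.lm ∧ Function.Surjective φ.ln ∧ ∀ x, φ.g (φ.lm x) = 0

/-- The five local conditions of Definition 5.2.1 defining an oriented 1-cobordism
between signed finite sets (signs recorded by Boolean functions, `true` = `+`). -/
def IsOriented {m n C : Type} (sm : m → Bool) (sn : n → Bool)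
    (lm : m → C) (ln : n → C) : Prop :=
  ∀ c : C,
    (∃ a b : m, sm a = true ∧ sm b = false ∧ a ≠ b ∧
      (∀ x, lm x = c ↔ (x = a ∨ x = b)) ∧ (∀ y, ln y ≠ c)) ∨
    (∃ a b : n, sn a = true ∧ sn b = false ∧ a ≠ b ∧
      (∀ y, ln y = c ↔ (y = a ∨ y = b)) ∧ (∀ x, lm x ≠ c)) ∨
    (∃ a : m, ∃ b : n, sm a = sn b ∧
      (∀ x, lm x = c ↔ x = a) ∧ (∀ y, ln y = c ↔ y = b)) ∨
    ((∀ x, lm x ≠ c) ∧ (∀ y, ln y ≠ c))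

/-! Because `l_n` of the cofibration ψ is injective, the pushout defining `φ ∘ ψ` is the disjoint
union of the components of φ and the components of ψ outside the image of `l_n`; a component `c`
of φ gets genus `g c` plus the genera of the components of ψ glued to it along `l_m⁻¹(c)`.

Since `l_n` of ψ also lifts through `l_m`, every non-closed component of φ is hit by the incoming
or outgoing map of `φ ∘ ψ`, so an equivalence χ of the composites carries it to a component of φ'
with the same preimages under `l_m` and `l_n`; the glued contributions then agree and so do the
genera. Closed components are not tracked by χ, but the closed components of `φ ∘ ψ` of a given
genus are those of ψ and those of φ, so cancelling ψ's shows that φ and φ' have equally many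
closed components of each genus. -/

open Function Finset

theorem exists_equiv_of_card_fiber_eq {α β γ : Type*} [Finite α] [Finite β] {f : α → γ}
    {g : β → γ} (h : ∀ c, Nat.card {a // f a = c} = Nat.card {b // g b = c}) :
    ∃ e : α ≃ β, ∀ a, g (e a) = f a :=
  let e := fun c => Classical.choice (Finite.card_eq.1 (h c))
  ⟨Equiv.ofFiberEquiv e, Equiv.ofFiberEquiv_map e⟩

theorem Nat.card_fiber_sumElim {α β γ : Type*} [Finite α] [Finite β] (f : α → γ)
    (g : β → γ) (c : γ) :
    Nat.card {x // Sum.elim f g x = c} =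
      Nat.card {a // f a = c} + Nat.card {b // g b = c} := by
  rw [Nat.card_congr Equiv.subtypeSum, Nat.card_sum]
  rfl

namespace Pushout

variable {k A B : Type} {f : k → A} {g : k → B}

theorem condition (f : k → A) (g : k → B) (z : k) : pInl f g (f z) = pInr f g (g z) :=
  Quot.sound ⟨z, rfl, rfl⟩

theorem eq_pInr_or_eq_pInl (p : Pushout f g) :
    (∃ b, p = pInr f g b) ∨ ∃ a ∉ Set.range f, p = pInl f g a := by
  induction p using Quot.ind with
  | mk x =>
    rcases x with a | b
    · by_cases ha : a ∈ Set.range f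
      · obtain ⟨z, rfl⟩ := ha
        exact .inl ⟨g z, condition f g z⟩
      · exact .inr ⟨a, ha, rfl⟩
    · exact .inl ⟨b, rfl⟩

noncomputable def normalize (hf : Injective f) : Pushout f g → A ⊕ B :=
  Quot.lift
    (Sum.elim (fun a => if h : a ∈ Set.range f then .inr (g h.choose) else .inl a) .inr) <| by
    rintro _ _ ⟨z, rfl, rfl⟩
    have hz : f z ∈ Set.range f := ⟨z, rfl⟩
    simp only [Sum.elim_inl, Sum.elim_inr, dif_pos hz, hf hz.choose_spec]

theorem normalize_pInl_of_notMem (hf : Injective f) {a : A} (ha : a ∉ Set.range f) :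
    normalize hf (pInl f g a) = .inl a :=
  dif_neg ha

theorem normalize_pInr (hf : Injective f) (b : B) : normalize hf (pInr f g b) = .inr b :=
  rfl

theorem pInr_injective (hf : Injective f) : Injective (pInr f g) :=
  fun _ _ h => Sum.inr_injective (congrArg (normalize hf) h)

theorem pInl_ne_pInr (hf : Injective f) {a : A} (ha : a ∉ Set.range f) (b : B) :
    pInl f g a ≠ pInr f g b := fun h => by
  simpa [normalize_pInl_of_notMem hf ha, normalize_pInr] using congrArg (normalize hf) h

theorem pInl_eq_pInl_iff (hf : Injective f) {a : A} (ha : a ∉ Set.range f) {a' : A} :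
    pInl f g a' = pInl f g a ↔ a' = a := by
  refine ⟨fun h => ?_, congrArg _⟩
  by_cases ha' : a' ∈ Set.range f
  · obtain ⟨z, rfl⟩ := ha'
    exact absurd ((condition f g z).symm.trans h).symm (pInl_ne_pInr hf ha _)
  · simpa [normalize_pInl_of_notMem hf ha, normalize_pInl_of_notMem hf ha'] using
      congrArg (normalize hf) h

theorem pInl_eq_pInr_iff (hf : Injective f) {a : A} {b : B} :
    pInl f g a = pInr f g b ↔ ∃ z, f z = a ∧ g z = b := by
  refine ⟨fun h => ?_, fun ⟨z, hz, hb⟩ => hz ▸ hb ▸ condition f g z⟩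
  by_cases ha : a ∈ Set.range f
  · obtain ⟨z, rfl⟩ := ha
    exact ⟨z, rfl, pInr_injective hf ((condition f g z).symm.trans h)⟩
  · exact absurd h (pInl_ne_pInr hf ha b)

end Pushout

section CompGenus

variable {k A B : Type} [Fintype k] [Fintype A] [Fintype B] {f : k → A}

theorem compGenus_pInr (hf : Injective f) (g : k → B) (g1 : A → ℤ) (g2 : B → ℤ) (b : B) :
    compGenus f g g1 g2 (pInr f g b) = ∑ z with g z = b, g1 (f z) + g2 b := by
  have hA : ({a | pInl f g a = pInr f g b} : Finset A) = ({z | g z = b} : Finset k).image f := by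
    ext a
    simp [Pushout.pInl_eq_pInr_iff hf, and_comm]
  have hB : ({b' | pInr f g b' = pInr f g b} : Finset B) = {b} := by
    ext b'
    simp [(Pushout.pInr_injective hf).eq_iff]
  have hk : ({z | pInl f g (f z) = pInr f g b} : Finset k) = ({z | g z = b} : Finset k) := by
    ext z
    simp [Pushout.condition, (Pushout.pInr_injective hf).eq_iff]
  rw [compGenus, hA, hB, hk, sum_image hf.injOn, sum_singleton, sum_sub_distrib, sum_const,
    nsmul_one]
  ring

theorem compGenus_pInl_of_notMem (hf : Injective f) (g : k → B) (g1 : A → ℤ) (g2 : B → ℤ)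
    {a : A} (ha : a ∉ Set.range f) : compGenus f g g1 g2 (pInl f g a) = g1 a := by
  have hA : ({a' | pInl f g a' = pInl f g a} : Finset A) = {a} := by
    ext a'
    simp [Pushout.pInl_eq_pInl_iff hf ha]
  have hB : ({b | pInr f g b = pInl f g a} : Finset B) = ∅ := by
    ext b
    simpa using (Pushout.pInl_ne_pInr hf ha b).symm
  have hk : ({z | pInl f g (f z) = pInl f g a} : Finset k) = ∅ := by
    ext z
    simpa [Pushout.pInl_eq_pInl_iff hf ha] using fun h => ha ⟨z, h⟩
  rw [compGenus, hA, hB, hk, sum_singleton, sum_empty, card_empty]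
  ring

end CompGenus

namespace Cob

variable {m n : Type}

def IsClosedComponent (φ : Cob m n) (c : φ.C) : Prop :=
  c ∉ Set.range φ.lm ∧ c ∉ Set.range φ.ln

noncomputable def closedCount (φ : Cob m n) (g : ℕ) : ℕ :=
  Nat.card {c : {c // φ.IsClosedComponent c} // φ.g c = g}

theorem not_isClosedComponent_lm (φ : Cob m n) (x : m) : ¬φ.IsClosedComponent (φ.lm x) :=
  fun h => h.1 ⟨x, rfl⟩

theorem not_isClosedComponent_ln (φ : Cob m n) (y : n) : ¬φ.IsClosedComponent (φ.ln y) :=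
  fun h => h.2 ⟨y, rfl⟩

theorem Equiv.closedCount_eq {φ φ' : Cob m n} (h : φ.Equiv φ') (g : ℕ) :
    φ.closedCount g = φ'.closedCount g := by
  obtain ⟨χ, hlm, hln, hg⟩ := h
  have hclosed : ∀ c, φ.IsClosedComponent c ↔ φ'.IsClosedComponent (χ c) := by
    intro c
    simp only [IsClosedComponent, Set.mem_range, ← hlm, ← hln, χ.apply_eq_iff_eq]
  exact Nat.card_congr ((χ.subtypeEquiv hclosed).subtypeEquiv fun c => by simp [hg])

theorem equiv_of_openEquiv {φ φ' : Cob m n}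
    (e : {c // ¬φ.IsClosedComponent c} ≃ {c // ¬φ'.IsClosedComponent c})
    (hlm : ∀ c x, φ.lm x = c.1 ↔ φ'.lm x = e c)
    (hln : ∀ c y, φ.ln y = c.1 ↔ φ'.ln y = e c) (hg : ∀ c, φ'.g (e c) = φ.g c)
    (hclosed : ∀ g, φ.closedCount g = φ'.closedCount g) :
    φ.Equiv φ' := by
  obtain ⟨e₀, he₀⟩ := exists_equiv_of_card_fiber_eq
    (f := fun c : {c // φ.IsClosedComponent c} => φ.g c)
    (g := fun c : {c // φ'.IsClosedComponent c} => φ'.g c) hclosed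
  let ξ : φ.C ≃ φ'.C :=
    (_root_.Equiv.sumCompl _).symm.trans ((e₀.sumCongr e).trans (_root_.Equiv.sumCompl _))
  have hξ_closed (c : φ.C) (hc : φ.IsClosedComponent c) : ξ c = e₀ ⟨c, hc⟩ := by
    simp [ξ, _root_.Equiv.sumCompl_symm_apply_of_pos hc]
  have hξ_open (c : φ.C) (hc : ¬φ.IsClosedComponent c) : ξ c = e ⟨c, hc⟩ := by
    simp [ξ, _root_.Equiv.sumCompl_symm_apply_of_neg hc]
  refine ⟨ξ, fun x => ?_, fun y => ?_, fun c => ?_⟩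
  · rw [hξ_open _ (φ.not_isClosedComponent_lm x)]
    exact ((hlm _ x).1 rfl).symm
  · rw [hξ_open _ (φ.not_isClosedComponent_ln y)]
    exact ((hln _ y).1 rfl).symm
  · by_cases hc : φ.IsClosedComponent c
    · rw [hξ_closed c hc]
      exact he₀ _
    · rw [hξ_open c hc]
      exact hg _

variable {X Y Z : Type} {ψ : Cob X Y}

section Linked

variable {φ φ' : Cob Y Z} {χ : Pushout ψ.ln φ.lm ≃ Pushout ψ.ln φ'.lm}
  {c : φ.C} {c' : φ'.C}

theorem eq_iff_of_linked (hinj : Injective ψ.ln) {W : Type} {a : W → φ.C} {a' : W → φ'.C}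
    (ha : ∀ w, χ (pInr _ _ (a w)) = pInr _ _ (a' w)) (h : χ (pInr _ _ c) = pInr _ _ c')
    (w : W) :
    a w = c ↔ a' w = c' := by
  rw [← (Pushout.pInr_injective hinj).eq_iff, ← χ.apply_eq_iff_eq, ha, h,
    (Pushout.pInr_injective hinj).eq_iff]

theorem isClosedComponent_iff_of_linked (hinj : Injective ψ.ln)
    (hlm : ∀ y, χ (pInr _ _ (φ.lm y)) = pInr _ _ (φ'.lm y))
    (hln : ∀ z, χ (pInr _ _ (φ.ln z)) = pInr _ _ (φ'.ln z))
    (h : χ (pInr _ _ c) = pInr _ _ c') :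
    φ'.IsClosedComponent c' ↔ φ.IsClosedComponent c := by
  simp only [IsClosedComponent, Set.mem_range, eq_iff_of_linked hinj hlm h,
    eq_iff_of_linked hinj hln h]

theorem exists_linked_of_not_isClosedComponent
    (hlm : ∀ y, χ (pInr _ _ (φ.lm y)) = pInr _ _ (φ'.lm y))
    (hln : ∀ z, χ (pInr _ _ (φ.ln z)) = pInr _ _ (φ'.ln z)) (hc : ¬φ.IsClosedComponent c) :
    ∃ c', χ (pInr _ _ c) = pInr _ _ c' := by
  rcases not_and_or.1 hc with hc | hc <;> obtain ⟨w, rfl⟩ := not_not.1 hc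
  exacts [⟨_, hlm w⟩, ⟨_, hln w⟩]

end Linked

variable [Fintype Y]

theorem g_comp_pInr (hinj : Injective ψ.ln) (φ : Cob Y Z) (c : φ.C) :
    (φ.comp ψ).g (pInr ψ.ln φ.lm c) = ∑ y with φ.lm y = c, ψ.g (ψ.ln y) + φ.g c := by
  change (compGenus _ _ _ _ _).toNat = _
  rw [compGenus_pInr hinj, ← Nat.cast_sum, ← Nat.cast_add, Int.toNat_natCast]

theorem g_comp_pInl (hinj : Injective ψ.ln) (φ : Cob Y Z) {a : ψ.C}
    (ha : a ∉ Set.range ψ.ln) :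
    (φ.comp ψ).g (pInl ψ.ln φ.lm a) = ψ.g a := by
  change (compGenus _ _ _ _ _).toNat = _
  rw [compGenus_pInl_of_notMem hinj _ _ _ ha, Int.toNat_natCast]

theorem pInr_lm_eq_comp_lm (φ : Cob Y Z) {u : Y → X} (hu : ∀ y, ψ.lm (u y) = ψ.ln y)
    (y : Y) :
    pInr ψ.ln φ.lm (φ.lm y) = (φ.comp ψ).lm (u y) := by
  change _ = pInl _ _ (ψ.lm (u y))
  rw [hu]
  exact (Pushout.condition _ _ y).symm

theorem isClosedComponent_comp_pInr (hψ : ψ.IsCofib) (φ : Cob Y Z) (c : φ.C) :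
    (φ.comp ψ).IsClosedComponent (pInr ψ.ln φ.lm c) ↔ φ.IsClosedComponent c := by
  obtain ⟨hinj, u, hu⟩ := hψ
  have hlm : pInr ψ.ln φ.lm c ∈ Set.range (φ.comp ψ).lm ↔ c ∈ Set.range φ.lm := by
    constructor
    · rintro ⟨x, hx⟩
      obtain ⟨y, -, rfl⟩ := (Pushout.pInl_eq_pInr_iff hinj).1 hx
      exact ⟨y, rfl⟩
    · rintro ⟨y, rfl⟩
      exact ⟨u y, (pInr_lm_eq_comp_lm φ hu y).symm⟩
  have hln : pInr ψ.ln φ.lm c ∈ Set.range (φ.comp ψ).ln ↔ c ∈ Set.range φ.ln :=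
    exists_congr fun _ => (Pushout.pInr_injective hinj).eq_iff
  exact and_congr (not_congr hlm) (not_congr hln)

theorem isClosedComponent_comp_pInl (hinj : Injective ψ.ln) (φ : Cob Y Z) {a : ψ.C}
    (ha : a ∉ Set.range ψ.ln) :
    (φ.comp ψ).IsClosedComponent (pInl ψ.ln φ.lm a) ↔ ψ.IsClosedComponent a := by
  have hlm : pInl ψ.ln φ.lm a ∈ Set.range (φ.comp ψ).lm ↔ a ∈ Set.range ψ.lm :=
    exists_congr fun _ => Pushout.pInl_eq_pInl_iff hinj ha
  have hln : pInl ψ.ln φ.lm a ∉ Set.range (φ.comp ψ).ln :=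
    fun ⟨_, hz⟩ => Pushout.pInl_ne_pInr hinj ha _ hz.symm
  exact ⟨fun h => ⟨hlm.not.1 h.1, ha⟩, fun h => ⟨hlm.not.2 h.1, hln⟩⟩

theorem closedCount_comp (hψ : ψ.IsCofib) (φ : Cob Y Z) (g : ℕ) :
    (φ.comp ψ).closedCount g = ψ.closedCount g + φ.closedCount g := by
  have hinj := hψ.1
  let F : {a // ψ.IsClosedComponent a} ⊕ {c // φ.IsClosedComponent c} →
      {p // (φ.comp ψ).IsClosedComponent p} :=
    Sum.elim (fun a => ⟨pInl ψ.ln φ.lm a, (isClosedComponent_comp_pInl hinj φ a.2.2).2 a.2⟩)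
      (fun c => ⟨pInr ψ.ln φ.lm c, (isClosedComponent_comp_pInr hψ φ c).2 c.2⟩)
  have hF : Bijective F := by
    constructor
    · rintro (a | c) (a' | c') h <;> replace h := congrArg Subtype.val h
      · exact congrArg _ (Subtype.ext ((Pushout.pInl_eq_pInl_iff hinj a'.2.2).1 h))
      · exact absurd h (Pushout.pInl_ne_pInr hinj a.2.2 _)
      · exact absurd h.symm (Pushout.pInl_ne_pInr hinj a'.2.2 _)
      · exact congrArg _ (Subtype.ext (Pushout.pInr_injective hinj h))
    · rintro ⟨p, hp⟩
      rcases Pushout.eq_pInr_or_eq_pInl p with ⟨c, rfl⟩ | ⟨a, ha, rfl⟩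
      · exact ⟨.inr ⟨c, (isClosedComponent_comp_pInr hψ φ c).1 hp⟩, rfl⟩
      · exact ⟨.inl ⟨a, (isClosedComponent_comp_pInl hinj φ ha).1 hp⟩, rfl⟩
  have hgF : ∀ x, (φ.comp ψ).g (F x) =
      Sum.elim (fun a : {a // ψ.IsClosedComponent a} => ψ.g a)
        (fun c : {c // φ.IsClosedComponent c} => φ.g c) x := by
    rintro (a | c)
    · exact g_comp_pInl hinj φ a.2.2
    · have hfiber : ∑ y with φ.lm y = c.1, ψ.g (ψ.ln y) = 0 :=
        sum_eq_zero fun y hy => absurd ⟨y, (mem_filter.1 hy).2⟩ c.2.1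
      exact (g_comp_pInr hinj φ c).trans (by rw [hfiber, zero_add]; rfl)
  rw [closedCount, ← Nat.card_congr ((Equiv.ofBijective F hF).subtypeEquiv fun x => by
    rw [Equiv.ofBijective_apply, hgF]), Nat.card_fiber_sumElim]
  rfl

theorem g_eq_of_linked {φ φ' : Cob Y Z} {χ : Pushout ψ.ln φ.lm ≃ Pushout ψ.ln φ'.lm}
    {c : φ.C} {c' : φ'.C} (hinj : Injective ψ.ln)
    (hlm : ∀ y, χ (pInr _ _ (φ.lm y)) = pInr _ _ (φ'.lm y))
    (hg : ∀ p, (φ'.comp ψ).g (χ p) = (φ.comp ψ).g p) (h : χ (pInr _ _ c) = pInr _ _ c') :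
    φ'.g c' = φ.g c := by
  have hgc := hg (pInr _ _ c)
  rw [h, g_comp_pInr hinj φ', g_comp_pInr hinj φ,
    filter_congr fun y _ => (eq_iff_of_linked hinj hlm h y).symm] at hgc
  omega

theorem exists_openEquiv_of_comp_equiv (hψ : ψ.IsCofib) {φ φ' : Cob Y Z}
    (h : (φ.comp ψ).Equiv (φ'.comp ψ)) :
    ∃ e : {c // ¬φ.IsClosedComponent c} ≃ {c // ¬φ'.IsClosedComponent c},
      (∀ c x, φ.lm x = c.1 ↔ φ'.lm x = e c) ∧
      (∀ c y, φ.ln y = c.1 ↔ φ'.ln y = e c) ∧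
      ∀ c, φ'.g (e c) = φ.g c := by
  obtain ⟨hinj, u, hu⟩ := hψ
  obtain ⟨χ, hχlm, hln, hg⟩ := h
  have hlm (y : Y) : χ (pInr _ _ (φ.lm y)) = pInr _ _ (φ'.lm y) := by
    rw [pInr_lm_eq_comp_lm φ hu, hχlm, pInr_lm_eq_comp_lm φ' hu]
  have hpartner (c : {c // ¬φ.IsClosedComponent c}) :
      ∃ c' : {c' // ¬φ'.IsClosedComponent c'}, χ (pInr _ _ c.1) = pInr _ _ c'.1 := by
    obtain ⟨c', hcc'⟩ := exists_linked_of_not_isClosedComponent hlm hln c.2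
    exact ⟨⟨c', (isClosedComponent_iff_of_linked hinj hlm hln hcc').not.2 c.2⟩, hcc'⟩
  choose F hF using hpartner
  have hFbij : Bijective F := by
    refine ⟨fun c₁ c₂ h => Subtype.ext (Pushout.pInr_injective hinj
      (χ.injective ((hF c₁).trans (h ▸ hF c₂).symm))), fun c' => ?_⟩
    obtain ⟨c, hc'c⟩ := exists_linked_of_not_isClosedComponent (χ := χ.symm)
      (fun y => χ.symm_apply_eq.2 (hlm y).symm) (fun z => χ.symm_apply_eq.2 (hln z).symm) c'.2
    have hcc' := (χ.symm_apply_eq.1 hc'c).symm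
    refine ⟨⟨c, (isClosedComponent_iff_of_linked hinj hlm hln hcc').not.1 c'.2⟩,
      Subtype.ext (Pushout.pInr_injective (g := φ'.lm) hinj ?_)⟩
    rw [← hF, hcc']
  exact ⟨Equiv.ofBijective F hFbij, fun c => eq_iff_of_linked hinj hlm (hF c),
    fun c => eq_iff_of_linked hinj hln (hF c), fun c => g_eq_of_linked hinj hlm hg (hF c)⟩

end Cob

/-- Proposition 4.4: cofibrations are epimorphisms in combinatorial 2-Cob. -/
theorem stmt_8 {X Y Z : Type} [Fintype Y] (ψ : Cob X Y) (hψ : ψ.IsCofib)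
    (φ φ' : Cob Y Z) (h : Cob.Equiv (Cob.comp φ ψ) (Cob.comp φ' ψ)) :
    Cob.Equiv φ φ' := by
  obtain ⟨e, hlm, hln, hg⟩ := Cob.exists_openEquiv_of_comp_equiv hψ h
  refine Cob.equiv_of_openEquiv e hlm hln hg fun g => ?_
  have hcomp := h.closedCount_eq g
  rw [Cob.closedCount_comp hψ, Cob.closedCount_comp hψ] at hcomp
  omega
end

section
/- In a factorization of an oriented 1-cobordism through an intermediate signed set k of minimal cardinality, the isomorphism class of k as a signed set is uniquely determined: k is in sign-preserving bijection with im(l_m) ∩ im(l_n), where each element c of this intersection carries the common sign of l_m⁻¹(c) and l_n⁻¹(c). -/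
open scoped Classical

/-!
Any factorization `m → k → n` of `(C, l_m, l_n)` injects `im l_m ∩ im l_n` into `k`: if `c` meets
both `m` and `n`, then in the pushout a point of `m` is glued to a point of `n`, and gluing only
happens through points of `k`. Conversely `C` itself factors through `im l_m ∩ im l_n` (the left
factor keeps the components meeting `m` or missing `n`, the right one those meeting `n`), so for
minimal `k` the injection is a bijection. Then every component of the left factor contains at
most one point `z` of `k`, and the orientation conditions make it a through-strand from a point of
`m` of the same sign as `z`; that point is the unique `m`-point over the corresponding `c`.
-/

theorem exists_pInl_eq_of_pInl_eq_pInr {k A B : Type} (f : k → A) (g : k → B) {a : A} {b : B}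
    (h : pInl f g a = pInr f g b) : ∃ z, pInl f g (f z) = pInl f g a := by
  -- "the class of `a` meets `f '' k`" is compatible with the generating relation
  let meetsImage : Pushout f g → Prop :=
    Quot.lift (Sum.elim (fun a => ∃ z, pInl f g (f z) = pInl f g a) fun _ => True)
      (by rintro _ _ ⟨z, rfl, rfl⟩; exact eq_true ⟨z, rfl⟩)
  have hb : meetsImage (pInr f g b) := trivial
  rwa [← h] at hb

theorem Finset.card_filter_subtype_val_eq {α : Type*} {p : α → Prop} [Fintype (Subtype p)]
    (a : α) [DecidablePred fun d : Subtype p => d.1 = a] :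
    (univ.filter fun d : Subtype p => d.1 = a).card = if p a then 1 else 0 := by
  split_ifs with ha
  · exact card_eq_one.mpr ⟨⟨a, ha⟩, by ext d; simp [Subtype.ext_iff]⟩
  · simp only [card_eq_zero, filter_eq_empty_iff]
    exact fun d _ hd => ha (hd ▸ d.2)

namespace IsOriented

variable {m n C : Type} {sm : m → Bool} {sn : n → Bool} {lm : m → C} {ln : n → C}

theorem eq_of_lm_eq (h : IsOriented sm sn lm ln) {x x' : m} {y : n}
    (hx : lm x = lm x') (hy : ln y = lm x) : x = x' := by
  rcases h (lm x) with ⟨_, _, _, _, _, _, hno⟩ | ⟨_, _, _, _, _, _, hno⟩ |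
    ⟨a, _, _, ha, _⟩ | ⟨hno, _⟩
  · exact absurd hy (hno y)
  · exact absurd rfl (hno x)
  · rw [(ha x).mp rfl, (ha x').mp hx.symm]
  · exact absurd rfl (hno x)

theorem exists_lm_eq_ln (h : IsOriented sm sn lm ln) {y : n}
    (hy : ∀ y', ln y' = ln y → y' = y) : ∃ x, lm x = ln y ∧ sm x = sn y := by
  rcases h (ln y) with ⟨_, _, _, _, _, _, hno⟩ | ⟨a, b, _, _, hab, hmem, _⟩ |
    ⟨a, b, hs, ha, hb⟩ | ⟨_, hno⟩
  · exact absurd rfl (hno y)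
  · exact absurd ((hy a ((hmem a).mpr (.inl rfl))).trans (hy b ((hmem b).mpr (.inr rfl))).symm) hab
  · exact ⟨a, (ha a).mpr rfl, (hb y).mp rfl ▸ hs⟩
  · exact absurd rfl (hno y)

end IsOriented

abbrev ImageInter {m n C : Type} (lm : m → C) (ln : n → C) : Type :=
  {c : C // (∃ x, lm x = c) ∧ ∃ y, ln y = c}

namespace ImageInter

variable {m n C : Type} (lm : m → C) (ln : n → C)

noncomputable def sign (sm : m → Bool) (c : ImageInter lm ln) : Bool :=
  sm (Classical.choose c.2.1)

def toLeft (c : ImageInter lm ln) : ↥(Set.range lm ∪ (Set.range ln)ᶜ) :=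
  ⟨c.1, .inl c.2.1⟩

def toRight (c : ImageInter lm ln) : Set.range ln :=
  ⟨c.1, c.2.2⟩

noncomputable def pushoutEquiv : Pushout (toLeft lm ln) (toRight lm ln) ≃ C where
  toFun := Quot.lift (Sum.elim Subtype.val Subtype.val) (by rintro _ _ ⟨z, rfl, rfl⟩; rfl)
  invFun c := if hc : c ∈ Set.range ln then pInr _ _ ⟨c, hc⟩ else pInl _ _ ⟨c, .inr hc⟩
  left_inv := by
    rintro ⟨d | d⟩
    · dsimp only
      split_ifs with hy
      · obtain hx | hny := d.2
        · exact (Quot.sound ⟨⟨d.1, hx, hy⟩, rfl, rfl⟩).symm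
        · exact absurd hy hny
      · rfl
    · exact dif_pos d.2
  right_inv c := by
    dsimp only
    split_ifs <;> rfl

variable {lm ln}

theorem sign_eq {sm : m → Bool} {sn : n → Bool} (h : IsOriented sm sn lm ln)
    {c : ImageInter lm ln} {x : m} (hx : lm x = c.1) : sign lm ln sm c = sm x := by
  obtain ⟨y, hy⟩ := c.2.2
  have hchoose := Classical.choose_spec c.2.1
  exact congrArg sm (h.eq_of_lm_eq (hchoose.trans hx.symm) (hy.trans hchoose.symm))

theorem pInl_eq_iff {d : ↥(Set.range lm ∪ (Set.range ln)ᶜ)}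
    {q : Pushout (toLeft lm ln) (toRight lm ln)} :
    pInl _ _ d = q ↔ d.1 = pushoutEquiv lm ln q :=
  (pushoutEquiv lm ln).apply_eq_iff_eq.symm

theorem pInl_toLeft_eq_iff {z : ImageInter lm ln} {q : Pushout (toLeft lm ln) (toRight lm ln)} :
    pInl _ _ (toLeft lm ln z) = q ↔ z.1 = pushoutEquiv lm ln q :=
  pInl_eq_iff

theorem pInr_eq_iff {d : Set.range ln} {q : Pushout (toLeft lm ln) (toRight lm ln)} :
    pInr _ _ d = q ↔ d.1 = pushoutEquiv lm ln q :=
  (pushoutEquiv lm ln).apply_eq_iff_eq.symm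

theorem compGenus_eq_zero [Fintype C] (q : Pushout (toLeft lm ln) (toRight lm ln)) :
    compGenus (toLeft lm ln) (toRight lm ln) (fun _ => 0) (fun _ => 0) q = 0 := by
  simp only [compGenus, pInl_toLeft_eq_iff]
  simp only [pInl_eq_iff, pInr_eq_iff]
  generalize pushoutEquiv lm ln q = c
  simp only [Finset.card_filter_subtype_val_eq, zero_sub, Finset.sum_const, smul_neg,
    nsmul_eq_mul, mul_one, Set.mem_union, Set.mem_compl_iff, Set.mem_range]
  -- inclusion–exclusion: `[c ∈ im lm ∪ (im ln)ᶜ] + [c ∈ im ln] = 1 + [c ∈ im lm ∩ im ln]`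
  split_ifs <;> simp_all

variable (lm ln) [Fintype C]

noncomputable def leftFactor : Cob m (ImageInter lm ln) where
  C := ↥(Set.range lm ∪ (Set.range ln)ᶜ)
  lm x := ⟨lm x, .inl ⟨x, rfl⟩⟩
  ln := toLeft lm ln
  g _ := 0

noncomputable def rightFactor : Cob (ImageInter lm ln) n where
  C := Set.range ln
  lm := toRight lm ln
  ln y := ⟨ln y, y, rfl⟩
  g _ := 0

theorem comp_equiv :
    Cob.Equiv (@Cob.comp m (ImageInter lm ln) n inferInstance (rightFactor lm ln)
      (leftFactor lm ln)) { C := C, lm := lm, ln := ln, g := fun _ => 0 } :=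
  ⟨pushoutEquiv lm ln, fun _ => rfl, fun _ => rfl,
    fun q => (congrArg Int.toNat (compGenus_eq_zero q)).symm⟩

variable {lm ln} {sm : m → Bool} {sn : n → Bool}

theorem leftFactor_isOriented (h : IsOriented sm sn lm ln) :
    IsOriented sm (sign lm ln sm) (leftFactor lm ln).lm (leftFactor lm ln).ln := by
  dsimp only [IsOriented, leftFactor, toLeft]
  simp only [Subtype.ext_iff, ne_eq]
  intro d
  rcases h d.1 with ⟨a, b, ha, hb, hab, hmem, hno⟩ | ⟨a, _, _, _, _, hmem, hno⟩ |
    ⟨a, b, hs, ha, hb⟩ | ⟨hm, hn⟩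
  · refine .inl ⟨a, b, ha, hb, hab, hmem, fun c hc => ?_⟩
    obtain ⟨y, hy⟩ := c.2.2
    exact hno y (hy.trans hc)
  · exfalso
    rcases d.2 with ⟨x, hx⟩ | hd
    · exact hno x hx
    · exact hd ⟨a, (hmem a).mpr (.inl rfl)⟩
  · have hd : (∃ x, lm x = d.1) ∧ ∃ y, ln y = d.1 := ⟨⟨a, (ha a).mpr rfl⟩, b, (hb b).mpr rfl⟩
    exact .inr (.inr (.inl ⟨a, ⟨d.1, hd⟩, (sign_eq h ((ha a).mpr rfl)).symm, ha,
      fun c => Iff.rfl⟩))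
  · refine .inr (.inr (.inr ⟨hm, fun c hc => ?_⟩))
    obtain ⟨y, hy⟩ := c.2.2
    exact hn y (hy.trans hc)

theorem rightFactor_isOriented (h : IsOriented sm sn lm ln) :
    IsOriented (sign lm ln sm) sn (rightFactor lm ln).lm (rightFactor lm ln).ln := by
  dsimp only [IsOriented, rightFactor, toRight]
  simp only [Subtype.ext_iff, ne_eq]
  intro d
  obtain ⟨y₀, hy₀⟩ := d.2
  rcases h d.1 with ⟨-, -, -, -, -, -, hno⟩ | ⟨a, b, ha, hb, hab, hmem, hno⟩ |
    ⟨a, b, hs, ha, hb⟩ | ⟨-, hn⟩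
  · exact absurd hy₀ (hno y₀)
  · refine .inr (.inl ⟨a, b, ha, hb, hab, hmem, fun c hc => ?_⟩)
    obtain ⟨x, hx⟩ := c.2.1
    exact hno x (hx.trans hc)
  · have hd : (∃ x, lm x = d.1) ∧ ∃ y, ln y = d.1 := ⟨⟨a, (ha a).mpr rfl⟩, b, (hb b).mpr rfl⟩
    exact .inr (.inr (.inl ⟨⟨d.1, hd⟩, b, (sign_eq h ((ha a).mpr rfl)).trans hs,
      fun c => Iff.rfl, hb⟩))
  · exact absurd hy₀ (hn y₀)

end ImageInter

theorem exists_ln_of_comp_equiv {m k n C : Type} [Fintype k] {e : Cob m k} {f : Cob k n}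
    {lm : m → C} {ln : n → C} (χ : (f.comp e).C ≃ C) (hχm : ∀ x, χ ((f.comp e).lm x) = lm x)
    (hχn : ∀ y, χ ((f.comp e).ln y) = ln y) (c : ImageInter lm ln) :
    ∃ z, χ (pInl e.ln f.lm (e.ln z)) = c.1 := by
  obtain ⟨⟨x, hx⟩, y, hy⟩ := c.2
  have hxy : (f.comp e).lm x = (f.comp e).ln y := χ.injective (by rw [hχm, hχn, hx, hy])
  obtain ⟨z, hz⟩ := exists_pInl_eq_of_pInl_eq_pInr e.ln f.lm hxy
  exact ⟨z, by rw [hz, ← hx]; exact hχm x⟩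

theorem stmt_18_general {m n C : Type} [Fintype C]
    (sm : m → Bool) (sn : n → Bool) (lm : m → C) (ln : n → C)
    (h : IsOriented sm sn lm ln)
    (k : Type) (fk : Fintype k) (sk : k → Bool)
    (e : Cob m k) (f : Cob k n)
    (heo : IsOriented sm sk e.lm e.ln)
    (hcomp : Cob.Equiv (@Cob.comp m k n fk f e)
      ({ C := C, lm := lm, ln := ln, g := fun _ => 0 } : Cob m n))
    (hmin : ∀ (k' : Type) (fk' : Fintype k') (sk' : k' → Bool)
        (e' : Cob m k') (f' : Cob k' n),
        (∀ a, e'.g a = 0) → (∀ b, f'.g b = 0) →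
        IsOriented sm sk' e'.lm e'.ln → IsOriented sk' sn f'.lm f'.ln →
        Cob.Equiv (@Cob.comp m k' n fk' f' e')
          ({ C := C, lm := lm, ln := ln, g := fun _ => 0 } : Cob m n) →
        Nat.card k ≤ Nat.card k') :
    ∃ eq : k ≃ {c : C // (∃ x, lm x = c) ∧ ∃ y, ln y = c},
      ∀ z, ∀ x : m, lm x = (eq z).1 → sm x = sk z := by
  obtain ⟨χ, hχm, hχn, -⟩ := hcomp
  choose ι hι using exists_ln_of_comp_equiv (lm := lm) (ln := ln) χ hχm hχn
  have hinj : Function.Injective ι := fun c c' hcc => Subtype.ext (by rw [← hι c, ← hι c', hcc])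
  have hbij : Function.Bijective ι := (Nat.bijective_iff_injective_and_card ι).mpr
    ⟨hinj, le_antisymm (Nat.card_le_card_of_injective ι hinj)
      (hmin _ inferInstance _ _ _ (fun _ => rfl) (fun _ => rfl)
        (ImageInter.leftFactor_isOriented h) (ImageInter.rightFactor_isOriented h)
        (ImageInter.comp_equiv lm ln))⟩
  refine ⟨(Equiv.ofBijective ι hbij).symm, fun z x hx => ?_⟩
  obtain ⟨c, rfl⟩ := hbij.2 z
  rw [Equiv.ofBijective_symm_apply_apply] at hx
  -- `ι` is onto, so distinct points of `k` lie in distinct components of `e`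
  have hunique : ∀ z', e.ln z' = e.ln (ι c) → z' = ι c := by
    intro z' hz'
    obtain ⟨c', rfl⟩ := hbij.2 z'
    rw [hinj.eq_iff, Subtype.ext_iff, ← hι c', ← hι c, hz']
  obtain ⟨a, ha, hs⟩ := heo.exists_lm_eq_ln hunique
  have hac : lm a = c.1 := by rw [← hι c, ← ha]; exact (hχm a).symm
  obtain ⟨y, hy⟩ := c.2.2
  rw [h.eq_of_lm_eq (hx.trans hac.symm) (hy.trans hx.symm), hs]

/-- Lemma 5.4.4: in a factorization of an oriented 1-cobordism through
an intermediate signed set `k` of minimal cardinality, `k` is in sign-preserving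
bijection with `im(l_m) ∩ im(l_n)`, each element of which carries the common sign of
its preimages. -/
theorem stmt_18 {m n C : Type} [Fintype m] [Fintype n] [Fintype C]
    (sm : m → Bool) (sn : n → Bool) (lm : m → C) (ln : n → C)
    (h : IsOriented sm sn lm ln)
    (k : Type) (fk : Fintype k) (sk : k → Bool)
    (e : Cob m k) (f : Cob k n)
    (heg : ∀ a, e.g a = 0) (hfg : ∀ b, f.g b = 0)
    (heo : IsOriented sm sk e.lm e.ln) (hfo : IsOriented sk sn f.lm f.ln)
    (hcomp : Cob.Equiv (@Cob.comp m k n fk f e)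
      ({ C := C, lm := lm, ln := ln, g := fun _ => 0 } : Cob m n))
    (hmin : ∀ (k' : Type) (fk' : Fintype k') (sk' : k' → Bool)
        (e' : Cob m k') (f' : Cob k' n),
        (∀ a, e'.g a = 0) → (∀ b, f'.g b = 0) →
        IsOriented sm sk' e'.lm e'.ln → IsOriented sk' sn f'.lm f'.ln →
        Cob.Equiv (@Cob.comp m k' n fk' f' e')
          ({ C := C, lm := lm, ln := ln, g := fun _ => 0 } : Cob m n) →
        Nat.card k ≤ Nat.card k') :
    ∃ eq : k ≃ {c : C // (∃ x, lm x = c) ∧ ∃ y, ln y = c},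
      ∀ z, ∀ x : m, lm x = (eq z).1 → sm x = sk z :=
  stmt_18_general sm sn lm ln h k fk sk e f heo hcomp hmin
end
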